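/- Let ȳ and y be complex numbers, i ≠ j indices, and define the complex n×n matrix Y_{ij} = (ȳ + y) e_i e_iᵀ − y e_i e_jᵀ. Then for every v ∈ ℂⁿ, tr(H_r(Y_{ij}) · X Xᵀ) = Re(v_i · conj((ȳ + y) v_i − y v_j)); that is, the trace of H_r(Y_{ij}) against W = X Xᵀ equals the active power flow on line (i,j). -/
import Mathlib


open Matrix

/-- The stacked real/imaginary part vector `X = [Re v; Im v]` of a complex vector `v`. -/
noncomputable def stackX {n : ℕ} (v : Fin n → ℂ) : Fin n ⊕ Fin n → ℝ :=
  Sum.elim (fun i => (v i).re) (fun i => (v i).im)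

/-- The real block matrix
`H_r(A) = (1/2) [[Re(A + Aᵀ), Im(Aᵀ − A)], [Im(A − Aᵀ), Re(A + Aᵀ)]]`. -/
noncomputable def Hr {n : ℕ} (A : Matrix (Fin n) (Fin n) ℂ) :
    Matrix (Fin n ⊕ Fin n) (Fin n ⊕ Fin n) ℝ :=
  ((1 : ℝ) / 2) • Matrix.fromBlocks
    ((A + Aᵀ).map Complex.re) ((Aᵀ - A).map Complex.im)
    ((A - Aᵀ).map Complex.im) ((A + Aᵀ).map Complex.re)

/-- with `Y_{ij} = (ȳ + y) e_i e_iᵀ − y e_i e_jᵀ` and `i ≠ j`,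
`tr(H_r(Y_{ij}) · X Xᵀ) = Re(v_i ⋅ conj((ȳ + y) v_i − y v_j))`,
the active power flow on line `(i,j)`. -/
theorem trace_Hr_lineflow {n : ℕ} (ybar y : ℂ) (i j : Fin n) (hij : i ≠ j)
    (Yij : Matrix (Fin n) (Fin n) ℂ)
    (hYij : Yij = (ybar + y) • vecMulVec (Pi.single i (1 : ℂ)) (Pi.single i (1 : ℂ))
      - y • vecMulVec (Pi.single i (1 : ℂ)) (Pi.single j (1 : ℂ)))
    (v : Fin n → ℂ) :
    (Hr Yij * vecMulVec (stackX v) (stackX v)).trace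
      = (v i * starRingEnd ℂ ((ybar + y) * v i - y * v j)).re := by
  subst hYij
  simp only [Matrix.trace, Matrix.diag, Matrix.mul_apply, Fintype.sum_sum_type, Hr, stackX,
    Matrix.fromBlocks, Matrix.smul_apply, Matrix.of_apply, Sum.elim_inl, Sum.elim_inr,
    Matrix.map_apply, Matrix.add_apply, Matrix.sub_apply, Matrix.transpose_apply,
    Matrix.vecMulVec_apply, Pi.smul_apply, Pi.single_apply, smul_eq_mul,
    mul_ite, ite_mul, mul_one, mul_zero, zero_mul, one_mul, Complex.sub_re, Complex.sub_im,
    Complex.add_re, Complex.add_im, Complex.mul_re, Complex.mul_im]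
  simp only [Finset.sum_ite_eq, Finset.sum_ite_eq', Finset.mem_univ, if_true, hij, if_false,
    apply_ite Complex.re, apply_ite Complex.im, Complex.zero_re, Complex.zero_im]
  simp only [sub_mul, add_mul, mul_sub, mul_add, ite_mul, zero_mul, mul_ite, mul_zero,
    Finset.sum_sub_distrib, Finset.sum_add_distrib, Finset.sum_ite_eq, Finset.sum_ite_eq',
    Finset.mem_univ, if_true, Finset.sum_neg_distrib, neg_mul, Finset.sum_ite_irrel,
    Finset.sum_const_zero]
  simp [Complex.mul_re, Complex.mul_im, Complex.sub_re, Complex.sub_im, Complex.add_re,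
    Complex.add_im, Complex.conj_re, Complex.conj_im]
  ring
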